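/- If Z_0 and Z are independent centered Gaussians with variances γ₀² and γ² respectively, then E[(σ(Z_0) − σ(Z))·σ'(Z_0)·(μ(γ)·Z − μ(γ₀)·Z_0)] = −γ²·μ(γ)²·μ(γ₀) − μ(γ₀)·E[(σ(Z_0) − 1/2)·σ'(Z_0)·Z_0], where μ(b) = E[σ'(Z_b)] for Z_b ~ N(0,b²). -/

import Mathlib

open MeasureTheory ProbabilityTheory

noncomputable def sigmoid (x : ℝ) : ℝ := (1 + Real.exp (-x))⁻¹

noncomputable def sigmoid' (x : ℝ) : ℝ := sigmoid x * (1 - sigmoid x)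

/-- μ(b) = E[σ'(Z_b)] for Z_b ~ N(0, b²). -/
noncomputable def mu (b : NNReal) : ℝ := ∫ x, sigmoid' x ∂(gaussianReal 0 (b ^ 2))

/-!
Integrate out `Z` first. For fixed `Z₀ = x` the integrand is `σ'(x)` times
`(σ(x) - σ(Z)) (μ(γ) Z - μ(γ₀) x)`, whose expectation needs only `E[Z] = 0`,
`E[σ(Z)] = 1/2` (from `σ(-z) = 1 - σ(z)` and the symmetry of `Z`) and
`E[σ(Z) Z] = γ² μ(γ)`, Stein's identity `E[g(Z) Z] = Var(Z) E[g'(Z)]`. The latter is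
integration by parts against the density `p`, using `p'(x) = -(x / v) p(x)`.
-/

open scoped NNReal

namespace ProbabilityTheory

lemma hasDerivAt_gaussianPDFReal (μ : ℝ) (v : ℝ≥0) (x : ℝ) :
    HasDerivAt (gaussianPDFReal μ v) (-((x - μ) / v) * gaussianPDFReal μ v x) x := by
  have hexponent : HasDerivAt (fun y ↦ -(y - μ) ^ 2 / (2 * v)) (-((x - μ) / v)) x := by
    refine ((((hasDerivAt_id' x).sub_const μ).fun_pow 2).fun_neg.div_const
      (2 * (v : ℝ))).congr_deriv ?_
    ring
  rw [gaussianPDFReal_def]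
  exact (hexponent.exp.const_mul _).congr_deriv (by ring)

lemma integrable_gaussianReal_iff {μ : ℝ} {v : ℝ≥0} (hv : v ≠ 0) {f : ℝ → ℝ} :
    Integrable f (gaussianReal μ v) ↔ Integrable (fun x ↦ gaussianPDFReal μ v x * f x) := by
  rw [gaussianReal_of_var_ne_zero _ hv,
    integrable_withDensity_iff_integrable_smul' (measurable_gaussianPDF μ v)
      (ae_of_all _ fun _ ↦ gaussianPDF_lt_top)]
  simp only [toReal_gaussianPDF, smul_eq_mul]

lemma integrable_id_gaussianReal (μ : ℝ) (v : ℝ≥0) :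
    Integrable (fun x ↦ x) (gaussianReal μ v) :=
  (memLp_id_gaussianReal 1).integrable le_rfl

lemma integral_mul_sub_gaussianReal_eq_mul_integral_deriv {μ : ℝ} {v : ℝ≥0}
    {g g' : ℝ → ℝ} (hderiv : ∀ x, HasDerivAt g (g' x) x)
    (hg : Integrable g (gaussianReal μ v))
    (hg' : Integrable g' (gaussianReal μ v))
    (hgx : Integrable (fun x ↦ g x * (x - μ)) (gaussianReal μ v)) :
    ∫ x, g x * (x - μ) ∂gaussianReal μ v = v * ∫ x, g' x ∂gaussianReal μ v := by
  rcases eq_or_ne v 0 with rfl | hv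
  · simp [gaussianReal_zero_var]
  have hv' : (v : ℝ) ≠ 0 := by exact_mod_cast hv
  rw [integrable_gaussianReal_iff hv] at hg hg' hgx
  simp only [integral_gaussianReal_eq_integral_smul hv, smul_eq_mul]
  have hparts := integral_mul_deriv_eq_deriv_mul_of_integrable (u := g) (u' := g')
    (v := gaussianPDFReal μ v) (v' := fun x ↦ -((x - μ) / v) * gaussianPDFReal μ v x)
    (fun x _ ↦ hderiv x) (fun x _ ↦ hasDerivAt_gaussianPDFReal μ v x)
    ((hgx.const_mul (-(v : ℝ)⁻¹)).congr
      (ae_of_all _ fun x ↦ by simp only [Pi.mul_apply]; ring))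
    (hg'.congr (ae_of_all _ fun x ↦ by simp only [Pi.mul_apply]; ring))
    (hg.congr (ae_of_all _ fun x ↦ by simp only [Pi.mul_apply]; ring))
  have hx_term : ∫ x, g x * (-((x - μ) / v) * gaussianPDFReal μ v x) =
      -(v : ℝ)⁻¹ * ∫ x, gaussianPDFReal μ v x * (g x * (x - μ)) := by
    rw [← integral_const_mul]; congr 1 with x; ring
  have hderiv_term :
      ∫ x, g' x * gaussianPDFReal μ v x = ∫ x, gaussianPDFReal μ v x * g' x := by
    congr 1 with x; ring
  rw [hx_term, hderiv_term, neg_mul, neg_inj] at hparts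
  rw [← hparts, mul_inv_cancel_left₀ hv']

end ProbabilityTheory

lemma sigmoid_pos (x : ℝ) : 0 < sigmoid x := Real.sigmoid_pos x

lemma sigmoid_le_one (x : ℝ) : sigmoid x ≤ 1 := Real.sigmoid_le_one x

lemma sigmoid_neg (x : ℝ) : sigmoid (-x) = 1 - sigmoid x := Real.sigmoid_neg x

lemma hasDerivAt_sigmoid (x : ℝ) : HasDerivAt sigmoid (sigmoid' x) x := Real.hasDerivAt_sigmoid x

@[fun_prop]
lemma measurable_sigmoid : Measurable sigmoid := continuous_sigmoid.measurable

@[fun_prop]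
lemma measurable_sigmoid' : Measurable sigmoid' :=
  measurable_sigmoid.mul (measurable_const.sub measurable_sigmoid)

lemma abs_sigmoid_le_one (x : ℝ) : |sigmoid x| ≤ 1 :=
  abs_le.2 ⟨by linarith [sigmoid_pos x], sigmoid_le_one x⟩

lemma abs_sigmoid'_le_one (x : ℝ) : |sigmoid' x| ≤ 1 := by
  have := sigmoid_pos x
  have := sigmoid_le_one x
  exact abs_le.2 ⟨by unfold sigmoid'; nlinarith, by unfold sigmoid'; nlinarith⟩

lemma abs_sigmoid_sub_le_one (x : ℝ) {c : ℝ} (hc₀ : 0 ≤ c) (hc₁ : c ≤ 1) :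
    |sigmoid x - c| ≤ 1 :=
  abs_sub_le_iff.2 ⟨by linarith [sigmoid_le_one x], by linarith [sigmoid_pos x]⟩

lemma abs_sigmoid_sub_mul_sigmoid'_le_one (x : ℝ) {c : ℝ} (hc₀ : 0 ≤ c) (hc₁ : c ≤ 1) :
    |(sigmoid x - c) * sigmoid' x| ≤ 1 := by
  rw [abs_mul]
  exact mul_le_one₀ (abs_sigmoid_sub_le_one x hc₀ hc₁) (abs_nonneg _) (abs_sigmoid'_le_one x)

lemma integrable_sigmoid {ν : Measure ℝ} [IsFiniteMeasure ν] : Integrable sigmoid ν :=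
  .of_bound measurable_sigmoid.aestronglyMeasurable 1 (ae_of_all _ abs_sigmoid_le_one)

lemma integrable_sigmoid' {ν : Measure ℝ} [IsFiniteMeasure ν] : Integrable sigmoid' ν :=
  .of_bound measurable_sigmoid'.aestronglyMeasurable 1 (ae_of_all _ abs_sigmoid'_le_one)

lemma integral_sigmoid_of_map_neg_eq {ν : Measure ℝ} [IsProbabilityMeasure ν]
    (hν : ν.map (fun x ↦ -x) = ν) : ∫ x, sigmoid x ∂ν = 1 / 2 := by
  have h : ∫ x, sigmoid (-x) ∂ν = ∫ x, sigmoid x ∂ν := by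
    conv_rhs => rw [← hν]
    rw [integral_map measurable_neg.aemeasurable measurable_sigmoid.aestronglyMeasurable]
  simp only [sigmoid_neg] at h
  rw [integral_sub (integrable_const 1) integrable_sigmoid, integral_const, probReal_univ,
    one_smul] at h
  linarith

lemma integral_sigmoid_gaussianReal (v : ℝ≥0) : ∫ x, sigmoid x ∂gaussianReal 0 v = 1 / 2 :=
  integral_sigmoid_of_map_neg_eq (by simpa using gaussianReal_map_neg (μ := 0) (v := v))

lemma integrable_sigmoid_mul_id_gaussianReal (μ : ℝ) (v : ℝ≥0) :
    Integrable (fun x ↦ sigmoid x * x) (gaussianReal μ v) :=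
  (integrable_id_gaussianReal μ v).bdd_mul measurable_sigmoid.aestronglyMeasurable
    (ae_of_all _ abs_sigmoid_le_one)

lemma integral_sigmoid_mul_id_gaussianReal (v : ℝ≥0) :
    ∫ x, sigmoid x * x ∂gaussianReal 0 v = v * ∫ x, sigmoid' x ∂gaussianReal 0 v := by
  simpa using integral_mul_sub_gaussianReal_eq_mul_integral_deriv (μ := 0) hasDerivAt_sigmoid
    integrable_sigmoid integrable_sigmoid'
    (by simpa using integrable_sigmoid_mul_id_gaussianReal 0 v)

lemma integral_sub_sigmoid_mul_affine_gaussianReal (v : ℝ≥0) (a b c : ℝ) :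
    ∫ y, (a - sigmoid y) * (b * y - c) ∂gaussianReal 0 v =
      -(v * b * ∫ y, sigmoid' y ∂gaussianReal 0 v) - c * (a - 1 / 2) := by
  have hid := integrable_id_gaussianReal 0 v
  have hσid := integrable_sigmoid_mul_id_gaussianReal 0 v
  have hexpand : (fun y ↦ (a - sigmoid y) * (b * y - c)) =
      fun y ↦ (a * b * y + c * sigmoid y) - (b * (sigmoid y * y) + a * c) := by
    ext y; ring
  have hlin : Integrable (fun y ↦ a * b * y + c * sigmoid y) (gaussianReal 0 v) :=
    (hid.const_mul _).add (integrable_sigmoid.const_mul _)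
  have hquad : Integrable (fun y ↦ b * (sigmoid y * y) + a * c) (gaussianReal 0 v) :=
    (hσid.const_mul _).add (integrable_const _)
  rw [hexpand, integral_sub hlin hquad,
    integral_add (hid.const_mul _) (integrable_sigmoid.const_mul _),
    integral_add (hσid.const_mul _) (integrable_const _), integral_const_mul, integral_const_mul,
    integral_const_mul, integral_id_gaussianReal, integral_sigmoid_gaussianReal,
    integral_sigmoid_mul_id_gaussianReal, integral_const, probReal_univ, one_smul]
  ring

theorem mse_deriv_initial_identity (γ₀ γ : NNReal) :
    ∫ w, (sigmoid w.1 - sigmoid w.2) * sigmoid' w.1 * (mu γ * w.2 - mu γ₀ * w.1)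
        ∂((gaussianReal 0 (γ₀ ^ 2)).prod (gaussianReal 0 (γ ^ 2))) =
      -(γ : ℝ) ^ 2 * (mu γ) ^ 2 * mu γ₀ -
        mu γ₀ * ∫ x, (sigmoid x - 1/2) * sigmoid' x * x ∂(gaussianReal 0 (γ₀ ^ 2)) := by
  set ν₀ := gaussianReal 0 (γ₀ ^ 2)
  set ν := gaussianReal 0 (γ ^ 2)
  have hint : Integrable (fun w : ℝ × ℝ ↦
      (sigmoid w.1 - sigmoid w.2) * sigmoid' w.1 * (mu γ * w.2 - mu γ₀ * w.1))
      (ν₀.prod ν) :=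
    ((((integrable_id_gaussianReal 0 _).comp_snd ν₀).const_mul _).sub
      (((integrable_id_gaussianReal 0 _).comp_fst ν).const_mul _)).bdd_mul (c := 1)
      (by fun_prop : Measurable _).aestronglyMeasurable (ae_of_all _ fun w ↦
        abs_sigmoid_sub_mul_sigmoid'_le_one _ (sigmoid_pos _).le (sigmoid_le_one _))
  have hinner (x : ℝ) :
      ∫ y, (sigmoid x - sigmoid y) * sigmoid' x * (mu γ * y - mu γ₀ * x) ∂ν =
      sigmoid' x * (-((γ : ℝ) ^ 2 * mu γ * mu γ) - mu γ₀ * x * (sigmoid x - 1 / 2)) := by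
    simp_rw [mul_comm _ (sigmoid' x), mul_assoc]
    rw [integral_const_mul, ← mul_assoc, integral_sub_sigmoid_mul_affine_gaussianReal]
    push_cast [mu]
    ring
  have hweight : Integrable (fun x ↦ (sigmoid x - 1 / 2) * sigmoid' x * x) ν₀ :=
    (integrable_id_gaussianReal 0 _).bdd_mul (c := 1)
      (by fun_prop : Measurable _).aestronglyMeasurable (ae_of_all _ fun x ↦
        abs_sigmoid_sub_mul_sigmoid'_le_one _ (by norm_num) (by norm_num))
  have hsplit : (fun x ↦
      sigmoid' x * (-((γ : ℝ) ^ 2 * mu γ * mu γ) - mu γ₀ * x * (sigmoid x - 1 / 2))) =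
      fun x ↦ -((γ : ℝ) ^ 2 * mu γ * mu γ) * sigmoid' x -
        mu γ₀ * ((sigmoid x - 1 / 2) * sigmoid' x * x) := by
    ext x; ring
  rw [integral_prod _ hint]
  simp only [hinner]
  rw [hsplit, integral_sub (integrable_sigmoid'.const_mul _) (hweight.const_mul _),
    integral_const_mul, integral_const_mul]
  unfold mu
  ring
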